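/- Let X be a locally compact Hausdorff space, Y a T₁ space whose set of branch points V(Y) is locally finite, and p : X → Y an open continuous surjection. Then for every compact L ⊆ Y there exists a compact K ⊆ X with p(K) = L. -/

import Mathlib

/-!
A compact `L ⊆ Y` can only accumulate at branch points outside `L`: a non-branch point is
separated from each point of `L`, hence from all of `L` by compactness. Near `L` there are only
finitely many branch points, and removing the finitely many outside `L` from a neighbourhood
of `L` leaves an open `U` with `L = U ∩ closure L`, so `L` is locally closed. For a locally
closed compact `L = U ∩ Z`, cover `L` by images of interiors of finitely many compact sets
inside `p⁻¹ U`; their union `M` is compact and `M ∩ p⁻¹ Z` maps onto `L`.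
-/

/-- The set of branch points of `Y`: points `y` for which there exists `z ≠ y`
such that every open neighborhood of `z` meets every open neighborhood of `y`. -/
def BranchPoints (Y : Type*) [TopologicalSpace Y] : Set Y :=
  { y | ∃ z : Y, z ≠ y ∧
      ∀ U V : Set Y, IsOpen U → IsOpen V → y ∈ U → z ∈ V → (U ∩ V).Nonempty }

open Set Filter Topology

section BranchPoints

variable {Y : Type*} [TopologicalSpace Y]

lemma mem_branchPoints_iff {y : Y} :
    y ∈ BranchPoints Y ↔ ∃ z, z ≠ y ∧ ¬Disjoint (𝓝 y) (𝓝 z) := by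
  refine exists_congr fun z => and_congr_right fun _ => ?_
  simp only [(nhds_basis_opens y).disjoint_iff (nhds_basis_opens z), not_exists, not_and,
    not_disjoint_iff_nonempty_inter]
  exact ⟨fun h U ⟨hyU, hU⟩ V ⟨hzV, hV⟩ => h U V hU hV hyU hzV,
    fun h U V hU hV hyU hzV => h U ⟨hyU, hU⟩ V ⟨hzV, hV⟩⟩

lemma IsCompact.closure_subset_union_branchPoints {L : Set Y} (hL : IsCompact L) :
    closure L ⊆ L ∪ BranchPoints Y := by
  intro y hy
  by_contra! hyL
  rw [mem_union, not_or, mem_branchPoints_iff] at hyL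
  push Not at hyL
  have hsep : Disjoint (𝓝ˢ L) (𝓝 y) := hL.disjoint_nhdsSet_left.2 fun z hz =>
    (hyL.2 z fun hzy => hyL.1 (hzy ▸ hz)).symm
  have : Disjoint (closure L) {y} := by
    rw [← disjoint_principal_nhdsSet, nhdsSet_singleton]
    exact hsep.mono_left principal_le_nhdsSet
  exact this.notMem_of_mem_left hy rfl

end BranchPoints

lemma IsCompact.exists_isOpen_superset_inter_finite {Y : Type*} [TopologicalSpace Y]
    {S L : Set Y} (hS : ∀ y, ∃ U, IsOpen U ∧ y ∈ U ∧ (U ∩ S).Finite) (hL : IsCompact L) :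
    ∃ O, IsOpen O ∧ L ⊆ O ∧ (O ∩ S).Finite := by
  choose U hUo hyU hUS using hS
  obtain ⟨t, -, hLt⟩ := hL.elim_nhds_subcover U fun y _ => (hUo y).mem_nhds (hyU y)
  refine ⟨⋃ y ∈ t, U y, isOpen_biUnion fun y _ => hUo y, hLt, ?_⟩
  rw [iUnion₂_inter]
  exact t.finite_toSet.biUnion fun y _ => hUS y

lemma IsCompact.isLocallyClosed_of_locallyFinite_branchPoints {Y : Type*} [TopologicalSpace Y]
    [T1Space Y] (hV : ∀ y : Y, ∃ U, IsOpen U ∧ y ∈ U ∧ (U ∩ BranchPoints Y).Finite)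
    {L : Set Y} (hL : IsCompact L) : IsLocallyClosed L := by
  obtain ⟨O, hO, hLO, hOB⟩ := hL.exists_isOpen_superset_inter_finite hV
  have hclosed : IsClosed ((O ∩ BranchPoints Y) \ L) := (hOB.subset sdiff_subset).isClosed
  refine ⟨O \ ((O ∩ BranchPoints Y) \ L), closure L, hO.sdiff hclosed, isClosed_closure, ?_⟩
  ext y
  constructor
  · intro hy
    exact ⟨⟨hLO hy, fun h => h.2 hy⟩, subset_closure hy⟩
  · rintro ⟨⟨hyO, hyB⟩, hy⟩
    by_contra hyL
    have hbranch := (hL.closure_subset_union_branchPoints hy).resolve_left hyL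
    exact hyB ⟨⟨hyO, hbranch⟩, hyL⟩

section OpenMap

variable {X Y : Type*} [TopologicalSpace X] [TopologicalSpace Y] {p : X → Y}

lemma IsOpenMap.exists_isCompact_subset_and_subset_image [LocallyCompactSpace X]
    (ho : IsOpenMap p) {U : Set X} (hU : IsOpen U) {L : Set Y} (hL : IsCompact L)
    (hLU : L ⊆ p '' U) : ∃ M, IsCompact M ∧ M ⊆ U ∧ L ⊆ p '' M := by
  have hlocal : ∀ y ∈ L, ∃ K, IsCompact K ∧ K ⊆ U ∧ y ∈ p '' interior K := by
    intro y hy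
    obtain ⟨x, hxU, rfl⟩ := hLU hy
    obtain ⟨K, hK, hxK, hKU⟩ := exists_compact_subset hU hxU
    exact ⟨K, hK, hKU, mem_image_of_mem p hxK⟩
  choose! K hK hKU hyK using hlocal
  obtain ⟨t, htL, hLt⟩ := hL.elim_nhds_subcover (fun y => p '' interior (K y))
    fun y hy => (ho _ isOpen_interior).mem_nhds (hyK y hy)
  refine ⟨⋃ y ∈ t, K y, t.finite_toSet.isCompact_biUnion fun y hy => hK y (htL y hy),
    iUnion₂_subset fun y hy => hKU y (htL y hy), hLt.trans ?_⟩
  simp only [image_iUnion₂]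
  exact iUnion₂_mono fun y _ => image_mono interior_subset

lemma IsLocallyClosed.exists_isCompact_image_eq [LocallyCompactSpace X] (hc : Continuous p)
    (ho : IsOpenMap p) {L : Set Y} (hLc : IsLocallyClosed L) (hL : IsCompact L)
    (hLp : L ⊆ range p) : ∃ K, IsCompact K ∧ p '' K = L := by
  obtain ⟨U, Z, hU, hZ, rfl⟩ := hLc
  have hLU : U ∩ Z ⊆ p '' (p ⁻¹' U) := by
    rw [image_preimage_eq_inter_range]
    exact subset_inter inter_subset_left hLp
  obtain ⟨M, hM, hMU, hLM⟩ := ho.exists_isCompact_subset_and_subset_image (hU.preimage hc) hL hLU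
  refine ⟨M ∩ p ⁻¹' Z, hM.inter_right (hZ.preimage hc), subset_antisymm ?_ fun y hy => ?_⟩
  · rintro _ ⟨x, ⟨hxM, hxZ⟩, rfl⟩
    exact ⟨hMU hxM, hxZ⟩
  · obtain ⟨x, hxM, rfl⟩ := hLM hy
    exact mem_image_of_mem p ⟨hxM, hy.2⟩

end OpenMap

theorem propK_of_locallyFinite_branchPoints_general
    {X Y : Type*} [TopologicalSpace X] [LocallyCompactSpace X]
    [TopologicalSpace Y] [T1Space Y]
    (hV : ∀ y : Y, ∃ U : Set Y, IsOpen U ∧ y ∈ U ∧ (U ∩ BranchPoints Y).Finite)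
    (p : X → Y) (hc : Continuous p) (ho : IsOpenMap p)
    (hs : Function.Surjective p) :
    ∀ L : Set Y, IsCompact L → ∃ K : Set X, IsCompact K ∧ p '' K = L := by
  intro L hL
  exact (hL.isLocallyClosed_of_locallyFinite_branchPoints hV).exists_isCompact_image_eq hc ho hL
    (hs.range_eq ▸ subset_univ L)

/-- Let `X` be locally compact Hausdorff, `Y` a `T₁` space whose set of branch
points is locally finite, and `p : X → Y` an open continuous surjection. Then
every compact `L ⊆ Y` is the image of some compact `K ⊆ X`. -/
theorem propK_of_locallyFinite_branchPoints
    {X Y : Type*} [TopologicalSpace X] [LocallyCompactSpace X] [T2Space X]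
    [TopologicalSpace Y] [T1Space Y]
    (hV : ∀ y : Y, ∃ U : Set Y, IsOpen U ∧ y ∈ U ∧ (U ∩ BranchPoints Y).Finite)
    (p : X → Y) (hc : Continuous p) (ho : IsOpenMap p)
    (hs : Function.Surjective p) :
    ∀ L : Set Y, IsCompact L → ∃ K : Set X, IsCompact K ∧ p '' K = L :=
  propK_of_locallyFinite_branchPoints_general hV p hc ho hs
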